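/- arXiv:1810.07789 — 6 statements merged into one kernel-verified Lean document; each statement's English description precedes it below -/
import Mathlib

section
/- Let H be a complex Hilbert space and let a be a rank-1 orthogonal projection on H. Then for any orthogonal projections p and q on H, ‖p·a·q‖ = ‖a·p‖ · ‖a·q‖. -/
/-! A rank-one orthogonal projection is `a = |u⟩⟨u|` for a unit vector `u`, so
`p a q = |p u⟩⟨q* u|`, `a p = |u⟩⟨p* u|` and `a q = |u⟩⟨q* u|`, and the norm of `|x⟩⟨y|` is
`‖x‖ ‖y‖`. The identity then reduces to `‖p u‖ = ‖p* u‖`, which holds for every normal `p`,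
in particular for a self-adjoint `p`. -/

section

open InnerProductSpace ContinuousLinearMap Module

variable {𝕜 E : Type*} [RCLike 𝕜] [NormedAddCommGroup E] [InnerProductSpace 𝕜 E]

theorem Submodule.exists_norm_eq_one_eq_span_of_finrank_eq_one {K : Submodule 𝕜 E}
    (hK : finrank 𝕜 K = 1) : ∃ u : E, ‖u‖ = 1 ∧ K = 𝕜 ∙ u := by
  have : Nontrivial K := Module.nontrivial_of_finrank_eq_succ hK
  have : FiniteDimensional 𝕜 K := Module.finite_of_finrank_eq_succ hK
  obtain ⟨v, hv⟩ := exists_ne (0 : K)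
  have hv' : (v : E) ≠ 0 := by simpa using hv
  set u : E := (‖(v : E)‖⁻¹ : 𝕜) • (v : E)
  have hu : ‖u‖ = 1 := norm_smul_inv_norm hv'
  have hu_mem : u ∈ K := K.smul_mem _ v.2
  refine ⟨u, hu, (Submodule.eq_of_le_of_finrank_eq ?_ ?_).symm⟩
  · exact (Submodule.span_singleton_le_iff_mem u K).mpr hu_mem
  · rw [hK, finrank_span_singleton (norm_ne_zero_iff.mp (by simp [hu]))]

variable [CompleteSpace E]

theorem ContinuousLinearMap.IsStarProjection.exists_eq_rankOne_self {a : E →L[𝕜] E}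
    (ha : IsStarProjection a) (hrank : finrank 𝕜 (LinearMap.range (a : E →ₗ[𝕜] E)) = 1) :
    ∃ u : E, ‖u‖ = 1 ∧ a = rankOne 𝕜 u u := by
  obtain ⟨u, hu, hrange⟩ := Submodule.exists_norm_eq_one_eq_span_of_finrank_eq_one hrank
  refine ⟨u, hu, ha.ext (isStarProjection_rankOne_self hu) ?_⟩
  have hu0 : innerSL 𝕜 u ≠ 0 := by simp [← norm_ne_zero_iff, hu]
  rw [rankOne_def, range_smulRight_apply hu0, hrange]

theorem norm_mul_rankOne_self_mul {p : E →L[𝕜] E} [IsStarNormal p] (q : E →L[𝕜] E) {u : E}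
    (hu : ‖u‖ = 1) :
    ‖p * rankOne 𝕜 u u * q‖ = ‖rankOne 𝕜 u u * p‖ * ‖rankOne 𝕜 u u * q‖ := by
  simp only [mul_def, comp_rankOne, rankOne_comp, norm_rankOne, hu, one_mul,
    (isStarNormal_iff_norm_eq_adjoint.mp ‹_› u)]

end

theorem stmt1_general {H : Type*} [NormedAddCommGroup H] [InnerProductSpace ℂ H] [CompleteSpace H]
    (a p q : H →L[ℂ] H)
    (ha : IsSelfAdjoint a ∧ a * a = a)
    (hrank : Module.finrank ℂ (LinearMap.range (a : H →ₗ[ℂ] H)) = 1)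
    (hp : IsSelfAdjoint p ∧ p * p = p) :
    ‖p * a * q‖ = ‖a * p‖ * ‖a * q‖ := by
  obtain ⟨u, hu, rfl⟩ :=
    ContinuousLinearMap.IsStarProjection.exists_eq_rankOne_self ⟨ha.2, ha.1⟩ hrank
  have : IsStarNormal p := hp.1.isStarNormal
  exact norm_mul_rankOne_self_mul q hu

/-- Let `H` be a complex Hilbert space and `a` a rank-1 orthogonal projection
on `H`. Then for any orthogonal projections `p` and `q` on `H`,
`‖p * a * q‖ = ‖a * p‖ * ‖a * q‖`. -/
theorem stmt1 {H : Type*} [NormedAddCommGroup H] [InnerProductSpace ℂ H] [CompleteSpace H]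
    (a p q : H →L[ℂ] H)
    (ha : IsSelfAdjoint a ∧ a * a = a)
    (hrank : Module.finrank ℂ (LinearMap.range (a : H →ₗ[ℂ] H)) = 1)
    (hp : IsSelfAdjoint p ∧ p * p = p)
    (hq : IsSelfAdjoint q ∧ q * q = q) :
    ‖p * a * q‖ = ‖a * p‖ * ‖a * q‖ :=
  stmt1_general a p q ha hrank hp
end

section
/- Let X be a metric space that is locally finite (every ball is finite) but not uniformly locally finite. Then there exist a radius r > 0, a sequence of points (x_n) in X, and finite subsets X_n = B_r(x_n) with |X_n| ≥ n, such that after passing to a subsequence, d(X_m, X_n) ≥ m + n for all m ≠ n; in particular X contains a sparse subspace ⋃_n X_n. -/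
/-!
Since the balls of a fixed radius `r₀` have unbounded cardinality, so do the balls of radius
`r = r₀ + 1 > 0`. Every bounded region is finite, so the cardinalities stay unbounded outside any
bounded region; hence we can choose centres `x₀, x₁, …` one at a time, each with a large ball and
far away from all previous centres.
-/

open Metric

section

variable {X : Type*} [PseudoMetricSpace X]

lemma exists_lt_ncard_closedBall_of_le (hloc : ∀ (x : X) (r : ℝ), (closedBall x r).Finite)
    {r₀ r : ℝ} (hr : r₀ ≤ r) (h : ∀ N : ℕ, ∃ x : X, N < (closedBall x r₀).ncard) (N : ℕ) :
    ∃ x : X, N < (closedBall x r).ncard := by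
  obtain ⟨x, hx⟩ := h N
  exact ⟨x, hx.trans_le (Set.ncard_le_ncard (closedBall_subset_closedBall hr) (hloc x r))⟩

lemma exists_lt_apply_forall_lt_dist (hloc : ∀ (x : X) (r : ℝ), (closedBall x r).Finite)
    {f : X → ℕ} (hf : ∀ N : ℕ, ∃ x, N < f x) (s : Finset X) (R : ℝ) (N : ℕ) :
    ∃ x, N < f x ∧ ∀ y ∈ s, R < dist y x := by
  have hT : (⋃ y ∈ s, closedBall y R).Finite := s.finite_toSet.biUnion fun y _ => hloc y R
  obtain ⟨M, hM⟩ := (hT.image f).bddAbove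
  obtain ⟨x, hx⟩ := hf (max N M)
  refine ⟨x, (le_max_left N M).trans_lt hx, fun y hy => ?_⟩
  by_contra! hxy
  have hxT : x ∈ ⋃ y ∈ s, closedBall y R := Set.mem_biUnion hy (mem_closedBall'.2 hxy)
  exact (hx.trans_le' (le_max_right N M)).not_ge (hM (Set.mem_image_of_mem f hxT))

lemma exists_seq_le_ncard_closedBall_lt_dist (hloc : ∀ (x : X) (r : ℝ), (closedBall x r).Finite)
    {r : ℝ} (h : ∀ N : ℕ, ∃ x : X, N < (closedBall x r).ncard) :
    ∃ x : ℕ → X, (∀ n, n ≤ (closedBall (x n) r).ncard) ∧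
      ∀ m n : ℕ, m ≠ n → 2 * ((max m n : ℕ) : ℝ) + 2 * r < dist (x m) (x n) := by
  classical
  -- The first coordinate is a strictly increasing index `kₙ ≥ n`, which bounds the ball size
  -- from below and prescribes the separation from the earlier centres.
  obtain ⟨f, hsize, hfar⟩ := exists_seq_of_forall_finset_exists
    (fun a : ℕ × X => a.1 ≤ (closedBall a.2 r).ncard)
    (fun a b => a.1 < b.1 ∧ 2 * (b.1 : ℝ) + 2 * r < dist a.2 b.2) fun s _ => by
      set K := s.sup Prod.fst + 1
      obtain ⟨z, hz, hfar⟩ := exists_lt_apply_forall_lt_dist hloc h (s.image Prod.snd)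
        (2 * K + 2 * r) K
      refine ⟨(K, z), hz.le, fun a ha => ⟨Nat.lt_succ_of_le (s.le_sup ha), ?_⟩⟩
      exact hfar a.2 (Finset.mem_image_of_mem _ ha)
  have hmono : StrictMono fun n => (f n).1 := strictMono_nat_of_lt_succ fun n =>
    (hfar n (n + 1) n.lt_succ_self).1
  have hfar' : ∀ m n : ℕ, m < n → 2 * (n : ℝ) + 2 * r < dist (f m).2 (f n).2 := fun m n hmn =>
    lt_of_le_of_lt (by gcongr; exact_mod_cast hmono.id_le n) (hfar m n hmn).2
  refine ⟨fun n => (f n).2, fun n => (hmono.id_le n).trans (hsize n), fun m n hmn => ?_⟩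
  rcases hmn.lt_or_gt with hmn | hmn
  · simpa [max_eq_right hmn.le] using hfar' m n hmn
  · simpa [max_eq_left hmn.le, dist_comm] using hfar' n m hmn

lemma dist_sub_le_dist_of_mem_closedBall {a b p q : X} {r r' : ℝ} (hp : p ∈ closedBall a r)
    (hq : q ∈ closedBall b r') : dist a b - (r + r') ≤ dist p q := by
  have := dist_triangle4 a p q b
  have := mem_closedBall'.1 hp
  have := mem_closedBall.1 hq
  linarith

end

/-- If a metric space `X` is locally finite (every closed ball is finite) but
not uniformly locally finite, then there exist a radius `r > 0` and a sequence of points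
`(x_n)` such that the balls `X_n = B_r(x_n)` satisfy `|X_n| ≥ n` and (after passing to a
subsequence) `d(X_m, X_n) ≥ m + n` for all `m ≠ n`; in particular `⋃ n, X_n` is a sparse
subspace of `X`. -/
theorem stmt2 {X : Type*} [MetricSpace X]
    (hloc : ∀ (x : X) (r : ℝ), (Metric.closedBall x r).Finite)
    (hnotunif : ¬ ∀ r : ℝ, 0 ≤ r → ∃ N : ℕ, ∀ x : X, (Metric.closedBall x r).ncard ≤ N) :
    ∃ r : ℝ, 0 < r ∧ ∃ x : ℕ → X,
      (∀ n : ℕ, n ≤ (Metric.closedBall (x n) r).ncard) ∧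
      (∀ m n : ℕ, m ≠ n →
        ∀ p ∈ Metric.closedBall (x m) r, ∀ q ∈ Metric.closedBall (x n) r,
          (m + n : ℝ) ≤ dist p q) := by
  push Not at hnotunif
  obtain ⟨r₀, hr₀, hunbdd⟩ := hnotunif
  obtain ⟨x, hsize, hfar⟩ := exists_seq_le_ncard_closedBall_lt_dist hloc
    (exists_lt_ncard_closedBall_of_le hloc (le_add_of_nonneg_right zero_le_one) hunbdd)
  refine ⟨r₀ + 1, by positivity, x, hsize, fun m n hmn p hp q hq => ?_⟩
  have hsum : (m + n : ℝ) ≤ 2 * max m n := by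
    rw [two_mul]; gcongr <;> simp
  linarith [hfar m n hmn, dist_sub_le_dist_of_mem_closedBall hp hq]
end

section
/- Let X be a countable set and let I ⊆ P(X) be an ideal containing all finite subsets of X. If I is nonmeager as a subset of P(X) ≅ 2^X with the product topology, then for every sequence (I_n) of pairwise disjoint finite subsets of X there exists an infinite set L ⊆ ℕ such that ⋃_{n∈L} I_n ∈ I. -/
/-!
Suppose no infinite subfamily of the blocks `Iₙ` has its union in `I`. Then every `S ∈ I`
contains only finitely many blocks, so its indicator function misses every block from some
index `k` on. For fixed `k` the functions missing every block `Iₙ`, `n ≥ k`, form a closed set,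
and it has empty interior: a basic open set constrains only finitely many coordinates, which
meet only finitely many of the disjoint blocks, so setting a later block to `true` stays inside
it. Hence `I` lies in a countable union of nowhere dense sets.
-/

open Filter

section

variable {X : Type*}

theorem eventually_disjoint_of_pairwise_disjoint {In : ℕ → Set X}
    (hdisj : Pairwise (Function.onFun Disjoint In)) {F : Set X} (hF : F.Finite) :
    ∀ᶠ n in atTop, Disjoint (In n) F := by
  rw [← Nat.cofinite_eq_atTop]
  have hmeet : {n | ¬Disjoint (In n) F} ⊆ ⋃ x ∈ F, {n | x ∈ In n} := by
    intro n hn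
    obtain ⟨x, hxn, hxF⟩ := Set.not_disjoint_iff.mp hn
    exact Set.mem_biUnion hxF hxn
  refine (hF.biUnion fun x _ => ?_).subset hmeet
  exact Set.Subsingleton.finite fun a ha b hb =>
    hdisj.eq (Set.not_disjoint_iff.mpr ⟨x, ha, hb⟩)

def missesBlocksFrom (In : ℕ → Set X) (k : ℕ) : Set (X → Bool) :=
  {f | ∀ n ≥ k, ∃ x ∈ In n, f x = false}

variable {In : ℕ → Set X}

theorem isClosed_missesBlocksFrom (hfin : ∀ n, (In n).Finite) (k : ℕ) :
    IsClosed (missesBlocksFrom In k) := by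
  have hrepr : missesBlocksFrom In k = ⋂ n ≥ k, ⋃ x ∈ In n, {f : X → Bool | f x = false} := by
    ext f
    simp [missesBlocksFrom]
  rw [hrepr]
  exact isClosed_biInter fun n _ =>
    (hfin n).isClosed_biUnion fun x _ => isClosed_eq (continuous_apply x) continuous_const

theorem interior_missesBlocksFrom (hdisj : Pairwise (Function.onFun Disjoint In)) (k : ℕ) :
    interior (missesBlocksFrom In k) = ∅ := by
  classical
  refine Set.eq_empty_iff_forall_notMem.mpr fun f hf => ?_
  obtain ⟨F, u, hfu, hFu⟩ := isOpen_pi_iff.mp isOpen_interior f hf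
  obtain ⟨n, hnF, hnk⟩ :=
    ((eventually_disjoint_of_pairwise_disjoint hdisj F.finite_toSet).and
      (eventually_ge_atTop k)).exists
  let g : X → Bool := (In n).piecewise (fun _ => true) f
  have hg : g ∈ (F : Set X).pi u := fun x hxF => by
    simpa only [g, Set.piecewise_eq_of_notMem _ _ _ (Set.disjoint_right.mp hnF hxF)]
      using (hfu x hxF).2
  obtain ⟨x, hxn, hgx⟩ := interior_subset (hFu hg) n hnk
  simp [g, Set.piecewise_eq_of_mem _ _ _ hxn] at hgx

theorem isNowhereDense_missesBlocksFrom (hfin : ∀ n, (In n).Finite)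
    (hdisj : Pairwise (Function.onFun Disjoint In)) (k : ℕ) :
    IsNowhereDense (missesBlocksFrom In k) :=
  (isClosed_missesBlocksFrom hfin k).isNowhereDense_iff.mpr (interior_missesBlocksFrom hdisj k)

theorem mem_iUnion_missesBlocksFrom {f : X → Bool}
    (hf : {n | In n ⊆ {x | f x = true}}.Finite) : f ∈ ⋃ k, missesBlocksFrom In k := by
  obtain ⟨b, hb⟩ := hf.bddAbove
  refine Set.mem_iUnion.mpr ⟨b + 1, fun n hn => ?_⟩
  by_contra! hcontained
  have : n ≤ b := hb fun x hx => by simpa using hcontained x hx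
  omega

end

theorem stmt3_general {X : Type*} (I : Set (Set X))
    (hdown : ∀ A ∈ I, ∀ B ⊆ A, B ∈ I)
    (hnonmeager : ¬ IsMeagre {f : X → Bool | {x : X | f x = true} ∈ I}) :
    ∀ In : ℕ → Set X, (∀ n, (In n).Finite) → Pairwise (Function.onFun Disjoint In) →
      ∃ L : Set ℕ, L.Infinite ∧ (⋃ n ∈ L, In n) ∈ I := by
  intro In hfin hdisj
  by_contra! hcon
  refine hnonmeager (IsMeagre.mono (fun f hf => ?_) (isMeagre_iUnion fun k =>
    (isNowhereDense_missesBlocksFrom hfin hdisj k).isMeagre))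
  refine mem_iUnion_missesBlocksFrom (Set.not_infinite.mp fun hinf => hcon _ hinf ?_)
  exact hdown _ hf _ (Set.iUnion₂_subset fun _ hn => hn)

/-- **Jalali–Naini, Talagrand; one direction.** Let `X` be a countable set and
`I ⊆ P(X)` an ideal containing all finite subsets of `X`. If `I` is nonmeager as a subset of
`P(X) ≅ 2^X` with the product topology, then for every sequence `(I_n)` of pairwise disjoint
finite subsets of `X` there is an infinite `L ⊆ ℕ` with `⋃_{n ∈ L} I_n ∈ I`. -/
theorem stmt3 {X : Type*} [Countable X] (I : Set (Set X))
    (hdown : ∀ A ∈ I, ∀ B ⊆ A, B ∈ I)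
    (hunion : ∀ A ∈ I, ∀ B ∈ I, A ∪ B ∈ I)
    (hfin : ∀ A : Set X, A.Finite → A ∈ I)
    (hnonmeager : ¬ IsMeagre {f : X → Bool | {x : X | f x = true} ∈ I}) :
    ∀ In : ℕ → Set X, (∀ n, (In n).Finite) → Pairwise (Function.onFun Disjoint In) →
      ∃ L : Set ℕ, L.Infinite ∧ (⋃ n ∈ L, In n) ∈ I :=
  stmt3_general I hdown hnonmeager
end

section
/- Let g : ℕ → ℕ and let X(g) ⊆ ℕ² with the metric d defined by d((m₀,m₁),(n₀,n₁)) = m₀+n₀+1 if m₀ ≠ n₀, 1 if m₀ = n₀ and m₁ ≠ n₁, 0 otherwise. Let a be a bounded operator on ℓ²(X(g)) with propagation at most r for some r. Then a decomposes as a = a₁ + a₂ where a₁ is supported on pairs ((m₀,m₁),(n₀,n₁)) with m₀ = n₀ (block-diagonal over the columns), and a₂ has finite rank. -/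
/-- The metric `d` on `ℕ²`: `d(m̄, n̄) = m₀ + n₀ + 1` if `m₀ ≠ n₀`, `1` if `m₀ = n₀` and
`m₁ ≠ n₁`, and `0` if `m̄ = n̄`. -/
noncomputable def dNN (m n : ℕ × ℕ) : ℝ :=
  if m = n then 0 else if m.1 = n.1 then 1 else (m.1 : ℝ) + (n.1 : ℝ) + 1

/-- The Hilbert space `ℓ²(X(g))`, where `X(g) = {m̄ : m₁ ≤ g(m₀)}`. -/
noncomputable abbrev Hg (g : ℕ → ℕ) := lp (fun _ : {m : ℕ × ℕ // m.2 ≤ g m.1} => ℂ) 2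

/-- The canonical basis vector `δ_x` of `ℓ²(X(g))`. -/
noncomputable def deltaG (g : ℕ → ℕ) (x : {m : ℕ × ℕ // m.2 ≤ g m.1}) : Hg g :=
  lp.single 2 x 1

/-!
Let `S` be the points of `X(g)` in the columns of index at most `r`; there are finitely many,
since each column is finite. With `P` the orthogonal projection onto the span of the `δ_x`,
`x ∈ S`, the compression `(1 - P) a (1 - P)` keeps exactly the matrix entries of `a` between
points outside `S`. Two such points in different columns are at distance greater than `r`, so
these entries vanish off the columns, while `a - (1 - P) a (1 - P) = a P + P a (1 - P)` has range
in `a(span δ_S) + span δ_S`, which is finite dimensional.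
-/

open Submodule ContinuousLinearMap

namespace Submodule

variable {𝕜 E : Type*} [RCLike 𝕜] [NormedAddCommGroup E] [InnerProductSpace 𝕜 E]
  (K : Submodule 𝕜 E) [K.HasOrthogonalProjection]

noncomputable def orthogonalCompression (a : E →L[𝕜] E) : E →L[𝕜] E :=
  Kᗮ.starProjection ∘L a ∘L Kᗮ.starProjection

variable {K}

theorem orthogonalCompression_apply_of_mem (a : E →L[𝕜] E) {u : E} (hu : u ∈ K) :
    K.orthogonalCompression a u = 0 := by
  simp [orthogonalCompression,
    (starProjection_apply_eq_zero_iff _).mpr (le_orthogonal_orthogonal K hu)]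

theorem inner_orthogonalCompression_of_mem_right (a : E →L[𝕜] E) (u : E) {v : E}
    (hv : v ∈ K) :
    inner 𝕜 (K.orthogonalCompression a u) v = 0 :=
  inner_left_of_mem_orthogonal hv (starProjection_apply_mem _ _)

theorem inner_orthogonalCompression_of_mem_orthogonal (a : E →L[𝕜] E) {u v : E}
    (hu : u ∈ Kᗮ) (hv : v ∈ Kᗮ) :
    inner 𝕜 (K.orthogonalCompression a u) v = inner 𝕜 (a u) v := by
  rw [orthogonalCompression, comp_apply, comp_apply, starProjection_eq_self_iff.mpr hu,
    inner_starProjection_left_eq_right, starProjection_eq_self_iff.mpr hv]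

theorem finiteDimensional_range_sub_orthogonalCompression [FiniteDimensional 𝕜 K]
    (a : E →L[𝕜] E) :
    FiniteDimensional 𝕜
      (LinearMap.range ((a - K.orthogonalCompression a : E →L[𝕜] E) : E →ₗ[𝕜] E)) := by
  refine Submodule.finiteDimensional_of_le (S₂ := K.map (a : E →ₗ[𝕜] E) ⊔ K) ?_
  rintro _ ⟨u, rfl⟩
  have hdecomp : (a - K.orthogonalCompression a) u =
      a (K.starProjection u) + K.starProjection (a (Kᗮ.starProjection u)) := by
    simp only [orthogonalCompression, starProjection_orthogonal, sub_apply, comp_apply,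
      id_apply, map_sub]
    abel
  rw [coe_coe, hdecomp]
  exact add_mem (mem_sup_left (mem_map_of_mem (starProjection_apply_mem K u)))
    (mem_sup_right (starProjection_apply_mem K _))

end Submodule

namespace lp

variable {ι 𝕜 : Type*} [RCLike 𝕜] [DecidableEq ι]

theorem single_one_mem_orthogonal_span {S : Set ι} {i : ι} (hi : i ∉ S) :
    lp.single 2 i (1 : 𝕜) ∈ (span 𝕜 ((fun j ↦ lp.single 2 j (1 : 𝕜)) '' S))ᗮ := by
  have hortho : span 𝕜 {lp.single 2 i (1 : 𝕜)} ⟂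
      span 𝕜 ((fun j ↦ lp.single 2 j (1 : 𝕜)) '' S) := by
    refine isOrtho_span.mpr ?_
    rintro _ rfl _ ⟨j, hj, rfl⟩
    simp [inner_single_left, lp.single_apply, ne_of_mem_of_not_mem hj hi]
  exact isOrtho_iff_le.mp hortho (mem_span_singleton_self _)

theorem inner_orthogonalCompression_single (S : Set ι) [DecidablePred (· ∈ S)]
    [(span 𝕜 ((fun j ↦ lp.single 2 j (1 : 𝕜)) '' S)).HasOrthogonalProjection]
    (a : lp (fun _ : ι ↦ 𝕜) 2 →L[𝕜] lp (fun _ : ι ↦ 𝕜) 2) (x y : ι) :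
    inner 𝕜 ((span 𝕜 ((fun j ↦ lp.single 2 j (1 : 𝕜)) '' S)).orthogonalCompression a
        (lp.single 2 x 1)) (lp.single 2 y 1) =
      if x ∉ S ∧ y ∉ S then inner 𝕜 (a (lp.single 2 x 1)) (lp.single 2 y 1) else 0 := by
  split_ifs with h
  · exact inner_orthogonalCompression_of_mem_orthogonal a
      (single_one_mem_orthogonal_span h.1) (single_one_mem_orthogonal_span h.2)
  · rcases not_and_or.mp h with hx | hy
    · rw [orthogonalCompression_apply_of_mem a
        (subset_span (Set.mem_image_of_mem _ (not_not.mp hx))), inner_zero_left]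
    · exact inner_orthogonalCompression_of_mem_right a _
        (subset_span (Set.mem_image_of_mem _ (not_not.mp hy)))

end lp

theorem finite_setOf_fst_le (g : ℕ → ℕ) (N : ℕ) :
    {x : {m : ℕ × ℕ // m.2 ≤ g m.1} | x.1.1 ≤ N}.Finite := by
  refine Set.Finite.of_finite_image ((Set.finite_Iic (N, (Finset.Iic N).sup g)).subset ?_)
    Subtype.val_injective.injOn
  rintro _ ⟨x, hx, rfl⟩
  exact ⟨hx, x.2.trans (Finset.le_sup (Finset.mem_Iic.mpr hx))⟩

theorem fst_lt_dNN {m n : ℕ × ℕ} (h : m.1 ≠ n.1) : (m.1 : ℝ) < dNN m n := by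
  rw [dNN, if_neg (fun hmn ↦ h (congrArg Prod.fst hmn)), if_neg h]
  linarith [(n.1.cast_nonneg : (0 : ℝ) ≤ n.1)]

/-- Let `a` be a bounded operator on `ℓ²(X(g))` of propagation at most `r`.
Then `a = a₁ + a₂` where `a₁` is block-diagonal over the columns (supported on pairs with
equal first coordinates) and `a₂` has finite rank. -/
theorem stmt11 (g : ℕ → ℕ) (r : ℝ) (a : Hg g →L[ℂ] Hg g)
    (hprop : ∀ x y : {m : ℕ × ℕ // m.2 ≤ g m.1},
      (inner ℂ (a (deltaG g x)) (deltaG g y) : ℂ) ≠ 0 → dNN x.1 y.1 ≤ r) :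
    ∃ a₁ a₂ : Hg g →L[ℂ] Hg g, a = a₁ + a₂ ∧
      (∀ x y : {m : ℕ × ℕ // m.2 ≤ g m.1},
        (inner ℂ (a₁ (deltaG g x)) (deltaG g y) : ℂ) ≠ 0 → x.1.1 = y.1.1) ∧
      FiniteDimensional ℂ (LinearMap.range (a₂ : Hg g →ₗ[ℂ] Hg g)) := by
  set S := {x : {m : ℕ × ℕ // m.2 ≤ g m.1} | x.1.1 ≤ ⌊r⌋₊}
  set K : Submodule ℂ (Hg g) := span ℂ ((fun j ↦ lp.single 2 j 1) '' S)
  have : FiniteDimensional ℂ K :=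
    FiniteDimensional.span_of_finite ℂ ((finite_setOf_fst_le g _).image _)
  refine ⟨K.orthogonalCompression a, a - K.orthogonalCompression a, (add_sub_cancel _ a).symm,
    fun x y hxy ↦ ?_, finiteDimensional_range_sub_orthogonalCompression a⟩
  rw [deltaG, deltaG, lp.inner_orthogonalCompression_single, ite_ne_right_iff] at hxy
  obtain ⟨⟨hx, -⟩, hentry⟩ := hxy
  by_contra hcol
  have hrx : r < x.1.1 := Nat.lt_of_floor_lt (not_le.mp hx)
  linarith [fst_lt_dNN hcol, hprop x y hentry]
end

section
/- Let X be a countable set and (p_n) a sequence of pairwise orthogonal finite-rank projections on ℓ²(X) with ‖p_n − q_n‖ < 2^{-n} for projections q_n. If ∑_n (p_n − q_n) converges in the strong operator topology, then it converges in norm to a compact operator. -/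
/-!
Since `‖p n - q n‖ < 2 ^ (-n)`, the series is absolutely summable in operator norm; its norm
limit is also a strong limit, hence equals `T`. A projection `q` with `‖p - q‖ < 1` has range of
dimension at most that of `p`, so every `q n` has finite rank, every partial sum is compact, and
the compact operators are closed in norm.
-/

open Filter Topology

section

variable {𝕜 E F : Type*} [NontriviallyNormedField 𝕜]
  [NormedAddCommGroup E] [NormedSpace 𝕜 E] [NormedAddCommGroup F] [NormedSpace 𝕜 F]

theorem isCompactOperator_of_finiteDimensional_range [LocallyCompactSpace 𝕜] (f : E →L[𝕜] F)
    [FiniteDimensional 𝕜 (LinearMap.range (f : E →ₗ[𝕜] F))] : IsCompactOperator f := by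
  set V := LinearMap.range (f : E →ₗ[𝕜] F)
  have : ProperSpace V := FiniteDimensional.proper 𝕜 V
  exact (isCompactOperator_of_locallyCompactSpace_dom
    (f.codRestrict V (LinearMap.mem_range_self _))).clm_comp V.subtypeL

theorem finiteDimensional_range_of_norm_sub_lt_one {p q : E →L[𝕜] E} (hq : q * q = q)
    [FiniteDimensional 𝕜 (LinearMap.range (p : E →ₗ[𝕜] E))] (hpq : ‖p - q‖ < 1) :
    FiniteDimensional 𝕜 (LinearMap.range (q : E →ₗ[𝕜] E)) := by
  set Vq := LinearMap.range (q : E →ₗ[𝕜] E)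
  -- On the range of `q`, `p x = 0` forces `‖x‖ = ‖(p - q) x‖ ≤ ‖p - q‖ * ‖x‖`, so `x = 0`.
  refine Module.Finite.of_injective (((p : E →ₗ[𝕜] E).comp Vq.subtype).codRestrict
    (LinearMap.range (p : E →ₗ[𝕜] E)) fun x => LinearMap.mem_range_self _ x.1) ?_
  rw [← LinearMap.ker_eq_bot, LinearMap.ker_eq_bot']
  rintro ⟨x, y, rfl⟩ hpx
  replace hpx : p (q y) = 0 := congrArg Subtype.val hpx
  have hqx : q (q y) = q y := congrArg (· y) hq
  by_contra hne
  have hx : 0 < ‖q y‖ := norm_pos_iff.2 fun h => hne (Subtype.ext h)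
  have : ‖q y‖ ≤ ‖p - q‖ * ‖q y‖ := by
    simpa [hpx, hqx] using (p - q).le_opNorm (q y)
  nlinarith

theorem ContinuousLinearMap.hasSum_of_tendsto_sum_apply [CompleteSpace F]
    {f : ℕ → E →L[𝕜] F} {T : E →L[𝕜] F} (hf : Summable f)
    (hT : ∀ v, Tendsto (fun N => (∑ n ∈ Finset.range N, f n) v) atTop (𝓝 (T v))) :
    HasSum f T := by
  obtain ⟨S, hS⟩ := hf
  convert hS
  ext v
  exact tendsto_nhds_unique (hT v)
    (((ContinuousLinearMap.apply 𝕜 F v).continuous.tendsto S).comp hS.tendsto_sum_nat)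

theorem isCompactOperator_of_hasSum {ι : Type*} [CompleteSpace F] {f : ι → E →L[𝕜] F}
    {T : E →L[𝕜] F} (hf : ∀ i, IsCompactOperator (f i)) (hT : HasSum f T) :
    IsCompactOperator T :=
  isCompactOperator_of_tendsto hT (.of_forall fun _ =>
    Submodule.sum_mem (compactOperator _ E F) fun i _ => hf i)

end

theorem stmt15_general {X : Type*}
    (p q : ℕ → (lp (fun _ : X => ℂ) 2 →L[ℂ] lp (fun _ : X => ℂ) 2))
    (hq : ∀ n, IsSelfAdjoint (q n) ∧ q n * q n = q n)
    (hfr : ∀ n, FiniteDimensional ℂ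
      (LinearMap.range ((p n) : lp (fun _ : X => ℂ) 2 →ₗ[ℂ] lp (fun _ : X => ℂ) 2)))
    (hnear : ∀ n, ‖p n - q n‖ < 2 ^ (-(n : ℤ)))
    (T : lp (fun _ : X => ℂ) 2 →L[ℂ] lp (fun _ : X => ℂ) 2)
    (hT : ∀ v, Filter.Tendsto (fun N => (∑ n ∈ Finset.range N, (p n - q n)) v)
      Filter.atTop (nhds (T v))) :
    Filter.Tendsto (fun N => ∑ n ∈ Finset.range N, (p n - q n)) Filter.atTop (nhds T) ∧
      IsCompactOperator T := by
  have hgeom : ∀ n, ‖p n - q n‖ ≤ (1 / 2 : ℝ) ^ n := fun n => by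
    simpa [zpow_neg] using (hnear n).le
  have hsum : HasSum (fun n => p n - q n) T :=
    ContinuousLinearMap.hasSum_of_tendsto_sum_apply
      (.of_norm_bounded summable_geometric_two hgeom) hT
  have hcompact : ∀ n, IsCompactOperator (p n - q n) := fun n => by
    have := hfr n
    have := finiteDimensional_range_of_norm_sub_lt_one (p := p n) (hq n).2
      ((hnear n).trans_le (zpow_le_one_of_nonpos₀ one_le_two (by simp)))
    exact (isCompactOperator_of_finiteDimensional_range _).sub
      (isCompactOperator_of_finiteDimensional_range _)
  exact ⟨hsum.tendsto_sum_nat, isCompactOperator_of_hasSum hcompact hsum⟩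

/-- Let `X` be a countable set, `(p_n)` pairwise orthogonal finite-rank
projections on `ℓ²(X)`, and `(q_n)` projections with `‖p_n - q_n‖ < 2^{-n}`. If
`∑_n (p_n - q_n)` converges in the strong operator topology (to `T`), then it converges in
norm and the limit `T` is a compact operator. -/
theorem stmt15 {X : Type*} [Countable X]
    (p q : ℕ → (lp (fun _ : X => ℂ) 2 →L[ℂ] lp (fun _ : X => ℂ) 2))
    (hp : ∀ n, IsSelfAdjoint (p n) ∧ p n * p n = p n)
    (hq : ∀ n, IsSelfAdjoint (q n) ∧ q n * q n = q n)
    (horth : ∀ m n, m ≠ n → p m * p n = 0)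
    (hfr : ∀ n, FiniteDimensional ℂ
      (LinearMap.range ((p n) : lp (fun _ : X => ℂ) 2 →ₗ[ℂ] lp (fun _ : X => ℂ) 2)))
    (hnear : ∀ n, ‖p n - q n‖ < 2 ^ (-(n : ℤ)))
    (T : lp (fun _ : X => ℂ) 2 →L[ℂ] lp (fun _ : X => ℂ) 2)
    (hT : ∀ v, Filter.Tendsto (fun N => (∑ n ∈ Finset.range N, (p n - q n)) v)
      Filter.atTop (nhds (T v))) :
    Filter.Tendsto (fun N => ∑ n ∈ Finset.range N, (p n - q n)) Filter.atTop (nhds T) ∧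
      IsCompactOperator T :=
  stmt15_general p q hq hfr hnear T hT
end

section
/- Let X and Y be sets, with subsets X'' ⊆ X and Y'' ⊆ Y cofinite, and let f : X'' → Y and g : Y'' → X be injections such that f⁻¹(Y \ Y'') and g⁻¹(X \ X'') are finite. Then there exist cofinite subsets X̃ ⊆ X and Ỹ ⊆ Y and a bijection h : X̃ → Ỹ such that for each x ∈ X̃, either x ∈ X'' and h(x) = f(x), or x ∈ range(g) and h(x) = g⁻¹(x). -/
/-! By Knaster–Tarski there is `S` with `S = A \ g '' (B \ f '' S)` (Banach's decomposition).
Put `h = f` on `S` and `h = g⁻¹` on `g '' (B \ f '' S)`: these two pieces cover `A`, their images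
`f '' S` and `B \ f '' S` are disjoint and cover `B`, so `h` is a bijection between supersets of
`A` and `B`, which are cofinite when `A` and `B` are. -/

namespace Set

variable {X Y : Type*} {A : Set X} {B : Set Y} {f : X → Y} {g : Y → X}

theorem exists_diff_image_diff_image_eq (A : Set X) (B : Set Y) (f : X → Y) (g : Y → X) :
    ∃ S, A \ g '' (B \ f '' S) = S :=
  let F : Set X →o Set X := ⟨fun S => A \ g '' (B \ f '' S), fun _ _ h =>
    sdiff_subset_sdiff_right (image_mono (sdiff_subset_sdiff_right (image_mono h)))⟩
  ⟨F.lfp, F.map_lfp⟩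

/-- `f` only supplies a value of `X → Y` when `Y` is empty and `invFunOn` is unavailable. -/
theorem InjOn.exists_leftInvOn (hg : InjOn g B) (f : X → Y) :
    ∃ g' : X → Y, LeftInvOn g' g B := by
  rcases isEmpty_or_nonempty Y with hY | hY
  · exact ⟨f, fun y => isEmptyElim y⟩
  · exact ⟨Function.invFunOn g B, hg.leftInvOn_invFunOn⟩

theorem bijOn_piecewise_of_diff_image_diff_image_eq {S : Set X} [DecidablePred (· ∈ S)]
    {g' : X → Y} (hS : A \ g '' (B \ f '' S) = S) (hf : InjOn f A)
    (hg' : LeftInvOn g' g B) :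
    BijOn (S.piecewise f g') (S ∪ g '' (B \ f '' S)) (f '' S ∪ (B \ f '' S)) := by
  set T := B \ f '' S
  have hSA : S ⊆ A := hS ▸ sdiff_subset
  have hST : Disjoint S (g '' T) := hS ▸ disjoint_sdiff_left
  have hS_bij : BijOn (S.piecewise f g') S (f '' S) :=
    (hf.mono hSA).bijOn_image.congr (piecewise_eqOn S f g').symm
  have hT_bij : BijOn (S.piecewise f g') (g '' T) T := by
    have hg'T : LeftInvOn g' g T := hg'.mono sdiff_subset
    refine (InvOn.bijOn ⟨hg'T.rightInvOn_image, hg'T⟩ ?_ (mapsTo_image g T)).congr ?_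
    · rintro _ ⟨y, hy, rfl⟩
      rwa [hg'T hy]
    · exact (piecewise_eqOn_compl S f g').symm.mono hST.subset_compl_left
  refine hS_bij.union hT_bij ((injOn_union hST).2 ⟨hS_bij.injOn, hT_bij.injOn, ?_⟩)
  intro x hx y hy hxy
  exact (hT_bij.mapsTo hy).2 (hxy ▸ hS_bij.mapsTo hx)

theorem exists_bijOn_superset_of_injOn (hf : InjOn f A) (hg : InjOn g B) :
    ∃ (A' : Set X) (B' : Set Y) (h : X → Y), A ⊆ A' ∧ B ⊆ B' ∧ BijOn h A' B' ∧
      ∀ x ∈ A', (x ∈ A ∧ h x = f x) ∨ (∃ y ∈ B, g y = x ∧ h x = y) := by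
  classical
  obtain ⟨S, hS⟩ := exists_diff_image_diff_image_eq A B f g
  obtain ⟨g', hg'⟩ := hg.exists_leftInvOn f
  have hSA : S ⊆ A := hS ▸ sdiff_subset
  refine ⟨S ∪ g '' (B \ f '' S), f '' S ∪ (B \ f '' S), S.piecewise f g', ?_, ?_,
    bijOn_piecewise_of_diff_image_diff_image_eq hS hf hg', ?_⟩
  · exact union_comm S _ ▸ sdiff_subset_iff.1 hS.subset
  · rw [union_sdiff_self]
    exact subset_union_right
  · rintro x (hx | ⟨y, hy, rfl⟩)
    · exact .inl ⟨hSA hx, piecewise_eq_of_mem S f g' hx⟩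
    · have hx : g y ∉ S := fun hx => (hS ▸ hx).2 (mem_image_of_mem g hy)
      exact .inr ⟨y, hy.1, rfl, (piecewise_eq_of_notMem S f g' hx).trans (hg' hy.1)⟩

end Set

theorem stmt18_general {X Y : Type*} (X'' : Set X) (Y'' : Set Y)
    (hX : X''ᶜ.Finite) (hY : Y''ᶜ.Finite)
    (f : X → Y) (g : Y → X)
    (hf : Set.InjOn f X'') (hg : Set.InjOn g Y'') :
    ∃ (Xt : Set X) (Yt : Set Y) (h : X → Y),
      Xtᶜ.Finite ∧ Ytᶜ.Finite ∧ Set.BijOn h Xt Yt ∧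
      ∀ x ∈ Xt, (x ∈ X'' ∧ h x = f x) ∨ (∃ y ∈ Y'', g y = x ∧ h x = y) := by
  obtain ⟨Xt, Yt, h, hXt, hYt, hbij, hh⟩ := Set.exists_bijOn_superset_of_injOn hf hg
  exact ⟨Xt, Yt, h, hX.subset (Set.compl_subset_compl.2 hXt),
    hY.subset (Set.compl_subset_compl.2 hYt), hbij, hh⟩

/-- **König's proof of Cantor–Schröder–Bernstein, cofinite form.** Let
`X'' ⊆ X` and `Y'' ⊆ Y` be cofinite, `f` injective on `X''`, `g` injective on `Y''`, with
`{x ∈ X'' : f x ∉ Y''}` and `{y ∈ Y'' : g y ∉ X''}` finite. Then there are cofinite subsets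
`X̃ ⊆ X`, `Ỹ ⊆ Y` and a bijection `h : X̃ → Ỹ` such that for each `x ∈ X̃` either
`x ∈ X''` and `h x = f x`, or `x ∈ range g` and `h x = g⁻¹ x`. -/
theorem stmt18 {X Y : Type*} (X'' : Set X) (Y'' : Set Y)
    (hX : X''ᶜ.Finite) (hY : Y''ᶜ.Finite)
    (f : X → Y) (g : Y → X)
    (hf : Set.InjOn f X'') (hg : Set.InjOn g Y'')
    (hfY : {x : X | x ∈ X'' ∧ f x ∉ Y''}.Finite)
    (hgX : {y : Y | y ∈ Y'' ∧ g y ∉ X''}.Finite) :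
    ∃ (Xt : Set X) (Yt : Set Y) (h : X → Y),
      Xtᶜ.Finite ∧ Ytᶜ.Finite ∧ Set.BijOn h Xt Yt ∧
      ∀ x ∈ Xt, (x ∈ X'' ∧ h x = f x) ∨ (∃ y ∈ Y'', g y = x ∧ h x = y) :=
  stmt18_general X'' Y'' hX hY f g hf hg
end
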